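/- arXiv:0712.0964 — 2 statements merged into one kernel-verified Lean document; each statement's English description precedes it below -/
import Mathlib

section
/- Let c > 0. Then, as r → ∞, log( Σ_{k=0}^∞ (c^k / k!) e^{−c} e^{−r/(k+1)} ) / √(2 r log r) → −1; that is, log( Σ_{k=0}^∞ (c^k / k!) e^{−c} e^{−r/(k+1)} ) ∼ −√(2 r log r). -/
open MeasureTheory Filter
open scoped ENNReal NNReal Topology Classical

noncomputable section

namespace JumpCoding

universe u v w

/-- The quantization error of `X` with distortion `d`, moment `s`, rate `r`,
with codebooks constrained to lie in the set `S`. -/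
def quantErrorIn {Ω F : Type*} [MeasurableSpace Ω] (P : Measure Ω) (X : Ω → F)
    (S : Set F) (d : F → F → ℝ) (s r : ℝ) : ℝ :=
  sInf { e : ℝ | ∃ (C : Finset F) (hC : C.Nonempty), ↑C ⊆ S ∧
    Real.log C.card ≤ r ∧
    e = (∫ ω, (C.inf' hC fun a => d (X ω) a) ^ s ∂P) ^ (1 / s) }

/-- The (unconstrained) quantization error `D^{(q)}(r | X, d, s)`. -/
def quantError {Ω F : Type*} [MeasurableSpace Ω] (P : Measure Ω) (X : Ω → F)
    (d : F → F → ℝ) (s r : ℝ) : ℝ :=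
  quantErrorIn P X Set.univ d s r

/-- The set of admissible numbers of codepoints for the quantization number
`d^{(q)}(ε | X, d, s)`. -/
def quantNumSet {Ω F : Type*} [MeasurableSpace Ω] (P : Measure Ω) (X : Ω → F)
    (d : F → F → ℝ) (s ε : ℝ) : Set ℕ :=
  { n : ℕ | 1 ≤ n ∧ quantError P X d s (Real.log n) ≤ ε }

/-- The quantization number `d^{(q)}(ε | X, d, s)` (junk value `0` if the defining
set is empty, i.e. if `d^{(q)} = ∞`). -/
def quantNum {Ω F : Type*} [MeasurableSpace Ω] (P : Measure Ω) (X : Ω → F)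
    (d : F → F → ℝ) (s ε : ℝ) : ℕ :=
  sInf (quantNumSet P X d s ε)

/-- The discrete entropy of a random variable. -/
def discreteEntropy {Ω F : Type*} [MeasurableSpace Ω] (P : Measure Ω)
    (Xh : Ω → F) : ℝ :=
  ∑' x : F, Real.negMulLog (P (Xh ⁻¹' {x})).toReal

/-- The entropy coding error of `X`, with reconstructions constrained to take
values in the set `S`. -/
def entropyErrorIn {Ω F : Type*} [MeasurableSpace Ω] (P : Measure Ω) (X : Ω → F)
    (S : Set F) (d : F → F → ℝ) (s r : ℝ) : ℝ :=
  sInf { e : ℝ | ∃ Xh : Ω → F, (Set.range Xh).Countable ∧ (∀ ω, Xh ω ∈ S) ∧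
    discreteEntropy P Xh ≤ r ∧
    e = (∫ ω, d (X ω) (Xh ω) ^ s ∂P) ^ (1 / s) }

/-- The (unconstrained) entropy coding error `D^{(e)}(r | X, d, s)`. -/
def entropyError {Ω F : Type*} [MeasurableSpace Ω] (P : Measure Ω) (X : Ω → F)
    (d : F → F → ℝ) (s r : ℝ) : ℝ :=
  entropyErrorIn P X Set.univ d s r

/-- The set of sizes of `ε`-nets of `(E, ρ)`. -/
def coveringSet (E : Type*) (ρ : E → E → ℝ) (ε : ℝ) : Set ℕ :=
  { n : ℕ | ∃ x : Fin n → E, ∀ y : E, ∃ i, ρ y (x i) ≤ ε }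

/-- The covering number `N(E, ρ, ε)` (junk value `0` if no finite `ε`-net exists). -/
def coveringNum (E : Type*) (ρ : E → E → ℝ) (ε : ℝ) : ℕ :=
  sInf (coveringSet E ρ ε)

/-- `ρ` is a distortion measure: measurable, symmetric, nonnegative and
vanishing exactly on the diagonal. -/
def IsDistortion {E : Type*} [MeasurableSpace E] (ρ : E → E → ℝ) : Prop :=
  Measurable (fun p : E × E => ρ p.1 p.2) ∧ (∀ x y, ρ x y = ρ y x) ∧
    (∀ x y, 0 ≤ ρ x y) ∧ (∀ x y, ρ x y = 0 ↔ x = y)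

/-- The path distortion `ρ_D(f, g) = ∫_0^1 ρ(f(t), g(t)) dt`. -/
def pathDist {E : Type*} (ρ : E → E → ℝ) (f g : ℝ → E) : ℝ :=
  ∫ t in Set.Ioo (0 : ℝ) 1, ρ (f t) (g t)

/-- The piecewise constant path on `[0,1)` with jump positions `Y ω 1 < Y ω 2 < …`
(`Y ω 0 = 0`), number of jumps `N ω` and values `A ω i` on `[Y ω i, Y ω (i+1))`. -/
def jumpPath {Ω E : Type*} (N : Ω → ℕ) (Y : Ω → ℕ → ℝ) (A : Ω → ℕ → E)
    (ω : Ω) (t : ℝ) : E :=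
  A ω (Nat.findGreatest (fun i => Y ω i ≤ t) (N ω))

/-- The data `(N, Y)` describes valid jump positions `0 = Y_0 < Y_1 < … < Y_N < 1`. -/
def ValidJumps {Ω : Type*} (N : Ω → ℕ) (Y : Ω → ℕ → ℝ) : Prop :=
  ∀ ω, Y ω 0 = 0 ∧ (∀ i, i < N ω → Y ω i < Y ω (i + 1)) ∧ Y ω (N ω) < 1

/-- `f : ℝ → E` is (on `[0,1)`) a piecewise constant function with finitely many
jumps, right-continuous at jumps. -/
def IsJumpFun {E : Type*} (f : ℝ → E) : Prop :=
  ∃ (n : ℕ) (y : ℕ → ℝ) (a : ℕ → E), y 0 = 0 ∧ (∀ i, i < n → y i < y (i + 1)) ∧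
    y n < 1 ∧ ∀ t, f t = a (Nat.findGreatest (fun i => y i ≤ t) n)

/-- The path space `D([0,1), E)`. -/
def JumpFuns (E : Type*) : Set (ℝ → E) := { f | IsJumpFun f }

/-- The jump-count condition: `P(N = k) ≤ (λ^k/k!) e^{-λ} K`. -/
def JumpCountBound {Ω : Type*} [MeasurableSpace Ω] (P : Measure Ω) (N : Ω → ℕ)
    (lam K : ℝ) : Prop :=
  ∀ k : ℕ, (P {ω | N ω = k}).toReal ≤ lam ^ k / (Nat.factorial k) * Real.exp (-lam) * K

/-- The open ordered simplex `0 < y_1 < … < y_k < 1`. -/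
def simplex (k : ℕ) : Set (Fin k → ℝ) :=
  { y | (∀ i, y i ∈ Set.Ioo (0 : ℝ) 1) ∧ ∀ i j, i < j → y i < y j }

/-- The jump positions form a Poisson point process of intensity `lam` on `[0,1)`:
`N` is Poisson(`lam`) and, given `N = k`, the jump positions are distributed as the
order statistics of `k` i.i.d. uniforms, i.e. with density `k!` on the simplex. -/
def PoissonJumps {Ω : Type*} [MeasurableSpace Ω] (P : Measure Ω) (N : Ω → ℕ)
    (Y : Ω → ℕ → ℝ) (lam : ℝ) : Prop :=
  ∀ (k : ℕ) (B : Set (Fin k → ℝ)), MeasurableSet B →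
    (P {ω | N ω = k ∧ (fun i : Fin k => Y ω (i.1 + 1)) ∈ B}).toReal
      = Real.exp (-lam) * lam ^ k * (volume (B ∩ simplex k)).toReal

/-- Condition (*): given `N = k`, the jump positions `(Y_1, …, Y_k)` are independent
of the jump destinations `(X(Y_0), …, X(Y_k)) = (A_0, …, A_k)`. -/
def IndepJumps {Ω E : Type*} [MeasurableSpace Ω] [MeasurableSpace E] (P : Measure Ω)
    (N : Ω → ℕ) (Y : Ω → ℕ → ℝ) (A : Ω → ℕ → E) : Prop :=
  ∀ (k : ℕ) (B : Set (Fin k → ℝ)) (G : Set (Fin (k + 1) → E)),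
    MeasurableSet B → MeasurableSet G →
    (P {ω | N ω = k ∧ (fun i : Fin k => Y ω (i.1 + 1)) ∈ B ∧
          (fun i : Fin (k + 1) => A ω i.1) ∈ G}).toReal
        * (P {ω | N ω = k}).toReal
      = (P {ω | N ω = k ∧ (fun i : Fin k => Y ω (i.1 + 1)) ∈ B}).toReal
        * (P {ω | N ω = k ∧ (fun i : Fin (k + 1) => A ω i.1) ∈ G}).toReal


/-!
Write `S(r) = E[e^{-r/(N+1)}]` with `N ~ Poisson(c)`. By AM-GM, `r/(k+1) ≥ 2√(ar) - a(k+1)`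
for every `a ≥ 0`, so the Poisson moment generating function gives
`S(r) ≤ exp(a - 2√(ar) + c(e^a - 1))`; at `a = log r / 2` this is
`exp(-√(2r log r) + O(√r))`. Conversely `S(r)` is at least its term `k = ⌊√(2r / log r)⌋`,
where `log k! ≤ k log k` and `r/(k+1)` are both at most `√(2r log r)/2`.
Both error terms are `O(√r) = o(√(2r log r))`.
-/

open Real Asymptotics
open scoped Nat

theorem two_sqrt_mul_le_mul_add_div {a r x : ℝ} (ha : 0 ≤ a) (hr : 0 ≤ r) (hx : 0 < x) :
    2 * √(a * r) ≤ a * x + r / x := by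
  have hprod : √(a * x) * √(r / x) = √(a * r) := by
    rw [← sqrt_mul (by positivity)]
    congr 1
    field_simp
  have := two_mul_le_add_sq (√(a * x)) (√(r / x))
  rwa [mul_assoc, hprod, sq_sqrt (by positivity), sq_sqrt (by positivity)] at this

theorem natCast_mul_log_le {k : ℕ} {y : ℝ} (hk : (k : ℝ) ≤ y) (hy : 1 ≤ y) :
    k * log k ≤ y * log y := by
  rcases k.eq_zero_or_pos with rfl | hk0
  · simpa using mul_nonneg (by linarith) (log_nonneg hy)
  · have hk1 : (1 : ℝ) ≤ k := by exact_mod_cast hk0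
    calc (k : ℝ) * log k ≤ k * log y := by gcongr
      _ ≤ y * log y := by gcongr; exact log_nonneg hy

theorem isLittleO_sqrt_sqrt_mul_log :
    (fun r : ℝ => √r) =o[atTop] fun r => √(2 * r * log r) := by
  have hlog : Tendsto (fun r : ℝ => ‖√(2 * log r)‖) atTop atTop := by
    simp_rw [norm_of_nonneg (sqrt_nonneg _)]
    exact tendsto_sqrt_atTop.comp (tendsto_log_atTop.const_mul_atTop two_pos)
  have := (isBigO_refl (fun r : ℝ => √r) atTop).mul_isLittleO
    ((isLittleO_one_left_iff ℝ).2 hlog)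
  refine this.congr' (by simp) ?_
  filter_upwards [eventually_ge_atTop 0] with r hr
  rw [← sqrt_mul hr]
  ring_nf

/-- `E[exp(-r/(N+1))]` for `N` Poisson distributed with mean `c`. -/
def poissonExpMean (c r : ℝ) : ℝ :=
  ∑' k : ℕ, c ^ k / k ! * exp (-c) * exp (-r / (k + 1))

section

variable {c r : ℝ}

theorem poissonTerm_le (hc : 0 ≤ c) {a : ℝ} (ha : 0 ≤ a) (hr : 0 ≤ r) (k : ℕ) :
    c ^ k / k ! * exp (-c) * exp (-r / (k + 1))
      ≤ (c * exp a) ^ k / k ! * exp (-c) * exp (a - 2 * √(a * r)) := by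
  have hamgm := two_sqrt_mul_le_mul_add_div ha hr (by positivity : (0 : ℝ) < k + 1)
  have hexp : exp (-r / (k + 1)) ≤ exp a ^ k * exp (a - 2 * √(a * r)) := by
    rw [← exp_nat_mul, ← exp_add, exp_le_exp, neg_div]
    linarith
  calc c ^ k / k ! * exp (-c) * exp (-r / (k + 1))
      ≤ c ^ k / k ! * exp (-c) * (exp a ^ k * exp (a - 2 * √(a * r))) := by gcongr
    _ = (c * exp a) ^ k / k ! * exp (-c) * exp (a - 2 * √(a * r)) := by ring

theorem summable_poissonTerm (hc : 0 ≤ c) (hr : 0 ≤ r) :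
    Summable fun k : ℕ => c ^ k / k ! * exp (-c) * exp (-r / (k + 1)) :=
  .of_nonneg_of_le (fun _ => by positivity) (poissonTerm_le hc le_rfl hr)
    (((summable_pow_div_factorial _).mul_right _).mul_right _)

theorem poissonExpMean_pos (hc : 0 ≤ c) (hr : 0 ≤ r) : 0 < poissonExpMean c r :=
  (summable_poissonTerm hc hr).tsum_pos (fun _ => by positivity) 0 (by positivity)

theorem poissonExpMean_le (hc : 0 ≤ c) {a : ℝ} (ha : 0 ≤ a) (hr : 0 ≤ r) :
    poissonExpMean c r ≤ exp (a - 2 * √(a * r) + c * (exp a - 1)) := by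
  have hsum : HasSum (fun k : ℕ => (c * exp a) ^ k / k ! * exp (-c) * exp (a - 2 * √(a * r)))
      (exp (c * exp a) * exp (-c) * exp (a - 2 * √(a * r))) := by
    have hexp := NormedSpace.expSeries_div_hasSum_exp (c * exp a)
    rw [← Real.exp_eq_exp_ℝ] at hexp
    exact (hexp.mul_right _).mul_right _
  calc poissonExpMean c r ≤ exp (c * exp a) * exp (-c) * exp (a - 2 * √(a * r)) :=
        hasSum_le (poissonTerm_le hc ha hr) (summable_poissonTerm hc hr).hasSum hsum
    _ = exp (a - 2 * √(a * r) + c * (exp a - 1)) := by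
        rw [← exp_add, ← exp_add]; ring_nf

theorem log_poissonExpMean_le (hc : 0 ≤ c) (hr : 1 ≤ r) :
    log (poissonExpMean c r) ≤ -√(2 * r * log r) + log r / 2 + c * (√r - 1) := by
  have hlog : 0 ≤ log r / 2 := by have := log_nonneg hr; positivity
  have hexp : exp (log r / 2) = √r := by
    rw [← log_sqrt (by positivity), exp_log (by positivity)]
  have hsqrt : 2 * √(log r / 2 * r) = √(2 * r * log r) := by
    rw [show (2 : ℝ) = √4 by rw [show (4 : ℝ) = 2 ^ 2 by norm_num, sqrt_sq (by norm_num)],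
      ← sqrt_mul (by norm_num)]
    ring_nf
  rw [log_le_iff_le_exp (poissonExpMean_pos hc (by linarith))]
  convert poissonExpMean_le hc hlog (by linarith : 0 ≤ r) using 2
  rw [hexp, hsqrt]
  ring

theorem log_poissonTerm (hc : 0 < c) (k : ℕ) :
    log (c ^ k / k ! * exp (-c) * exp (-r / (k + 1)))
      = k * log c - log k ! - c - r / (k + 1) := by
  rw [log_mul (by positivity) (by positivity), log_mul (by positivity) (by positivity),
    log_div (by positivity) (by positivity), log_pow, log_exp, log_exp]
  ring

theorem neg_le_log_poissonExpMean (hc : 0 < c) (hr : 0 ≤ r) {y : ℝ} (hy : 1 ≤ y) :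
    -(y * log y + r / y + y * |log c| + c) ≤ log (poissonExpMean c r) := by
  set k := ⌊y⌋₊
  have hky : (k : ℝ) ≤ y := Nat.floor_le (by linarith)
  have hyk : y < k + 1 := Nat.lt_floor_add_one y
  have hterm : log (c ^ k / k ! * exp (-c) * exp (-r / (k + 1))) ≤ log (poissonExpMean c r) :=
    log_le_log (by positivity)
      ((summable_poissonTerm hc.le hr).le_tsum k fun _ _ => by positivity)
  have hfact : log k ! ≤ k * log k := by
    rw [← log_pow]
    exact log_le_log (by positivity) (by exact_mod_cast Nat.factorial_le_pow k)
  have hlogc : -(y * |log c|) ≤ k * log c :=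
    calc -(y * |log c|) ≤ -(k * |log c|) := by gcongr
      _ ≤ k * log c := by nlinarith [neg_abs_le (log c), (Nat.cast_nonneg k : (0 : ℝ) ≤ k)]
  have hdiv : r / (k + 1) ≤ r / y := div_le_div_of_nonneg_left hr (by linarith) hyk.le
  rw [log_poissonTerm hc] at hterm
  linarith [natCast_mul_log_le hky hy]

theorem log_poissonExpMean_ge (hc : 0 < c) (hr : exp 2 ≤ r) :
    -(√(2 * r * log r) + √r * |log c| + c) ≤ log (poissonExpMean c r) := by
  have hr0 : 0 < r := (exp_pos 2).trans_le hr
  have hlr : 2 ≤ log r := by rwa [le_log_iff_exp_le hr0]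
  set s := √(2 * r * log r)
  have hssq : s ^ 2 = 2 * r * log r := sq_sqrt (by positivity)
  have hs0 : 0 ≤ s := sqrt_nonneg _
  have hlrs : log r ≤ s := by
    refine le_sqrt_of_sq_le ?_
    nlinarith [log_le_sub_one_of_pos hr0]
  have hsr : s ≤ √r * log r := by
    rw [← sqrt_sq (by linarith : 0 ≤ log r), ← sqrt_mul hr0.le]
    exact sqrt_le_sqrt (by nlinarith)
  set y := s / log r
  have hy1 : 1 ≤ y := by rw [le_div_iff₀ (by linarith)]; linarith
  have hyr : y ≤ √r := by rw [div_le_iff₀ (by linarith)]; exact hsr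
  have hylog : y * log y ≤ s / 2 :=
    calc y * log y ≤ y * (log r / 2) := by
          gcongr
          rw [← log_sqrt hr0.le]
          exact log_le_log (by linarith) hyr
      _ = s / 2 := by simp only [y]; field_simp
  have hry : r / y = s / 2 := by
    rw [div_div_eq_mul_div, div_eq_div_iff (by linarith) two_ne_zero]
    linarith [hssq]
  have hyc : y * |log c| ≤ √r * |log c| := by gcongr
  linarith [neg_le_log_poissonExpMean hc hr0.le hy1]

theorem abs_log_poissonExpMean_add_le (hc : 0 < c) (hr : exp 2 ≤ r) :
    |log (poissonExpMean c r) + √(2 * r * log r)| ≤ (1 + c + |log c|) * √r := by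
  have hr1 : 1 ≤ r := (one_le_exp (by norm_num)).trans hr
  have hsqrt1 : 1 ≤ √r := one_le_sqrt.2 hr1
  have hlog : log r / 2 ≤ √r := by
    rw [← log_sqrt (by linarith)]
    linarith [log_le_sub_one_of_pos (by linarith : 0 < √r)]
  have hupper := log_poissonExpMean_le hc.le hr1
  have hlower := log_poissonExpMean_ge hc hr
  rw [abs_le]
  constructor <;> nlinarith [abs_nonneg (log c)]

theorem log_poissonExpMean_isEquivalent (hc : 0 < c) :
    (fun r => log (poissonExpMean c r)) ~[atTop] fun r => -√(2 * r * log r) := by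
  refine IsLittleO.isEquivalent (IsLittleO.neg_right ?_)
  refine IsBigO.trans_isLittleO ?_ isLittleO_sqrt_sqrt_mul_log
  refine IsBigO.of_bound (1 + c + |log c|) ?_
  filter_upwards [eventually_ge_atTop (exp 2)] with r hr
  simpa [abs_of_nonneg (sqrt_nonneg r)] using abs_log_poissonExpMean_add_le hc hr

end

/-- For `c > 0`,
`log (Σ_{k=0}^∞ (c^k/k!) e^{−c} e^{−r/(k+1)}) ∼ −√(2 r log r)` as `r → ∞`. -/
theorem statement16 (c : ℝ) (hc : 0 < c) :
    Tendsto (fun r : ℝ =>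
        Real.log (∑' k : ℕ, c ^ k / (Nat.factorial k) * Real.exp (-c)
            * Real.exp (-r / ((k : ℝ) + 1)))
          / Real.sqrt (2 * r * Real.log r)) atTop (𝓝 (-1)) := by
  have hne : ∀ᶠ r : ℝ in atTop, -√(2 * r * log r) ≠ 0 := by
    filter_upwards [eventually_gt_atTop 1] with r hr
    have := log_pos hr
    exact neg_ne_zero.2 (sqrt_ne_zero'.2 (by positivity))
  have h := ((isEquivalent_iff_tendsto_one hne).1 (log_poissonExpMean_isEquivalent hc)).neg
  simpa [div_neg, poissonExpMean] using h

end JumpCoding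
end
end

section
/- There exist absolute constants c* > 0 and κ > 0 such that for every k ≥ 1, every random variable Y in [0,1]^k with Y_1 ≤ Y_2 ≤ … ≤ Y_k almost surely, every s > 0, and every r ≥ c* k: D^{(q)}(r | Y, ‖·‖_∞, s) ≤ (κ/k) e^{−r/k}. -/
open MeasureTheory Filter
open scoped ENNReal NNReal Topology Classical

noncomputable section

namespace JumpCoding

universe u v w

/-!
Round each coordinate of `Y` down to the grid `{0, 1/m, …, 1}`. Because the coordinates of `Y`
are ordered, the rounded point is a nondecreasing grid vector, and there are only
`(m + k).choose k ≤ (e (m + k) / k)^k` of those, rather than `(m + 1)^k`. With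
`m ≈ k e^{r/k - 3}` this codebook has at most `e^r` points and sup-norm error at most
`1/m ≤ (e^3 / k) e^{-r/k}`.
-/

open Real

lemma card_filter_monotone_le {α : Type*} [LinearOrder α] [Fintype α] (k : ℕ) :
    (Finset.univ.filter fun f : Fin k → α => Monotone f).card
      ≤ (Fintype.card α + k - 1).choose k := by
  rw [← Sym.card_sym_eq_choose]
  refine Finset.card_le_card_of_injOn
    (fun f => (⟨Multiset.map f Finset.univ.val, by simp⟩ : Sym α k))
    (fun _ _ => Finset.mem_coe.2 (Finset.mem_univ _)) ?_
  intro f hf g hg hfg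
  simp only [Finset.coe_filter, Finset.mem_univ, true_and, Set.mem_ofPred_eq] at hf hg
  have hperm : (List.ofFn f).Perm (List.ofFn g) := by
    simpa using congrArg Subtype.val hfg
  exact List.ofFn_injective (hperm.eq_of_sortedLE hf.sortedLE_ofFn hg.sortedLE_ofFn)

lemma choose_le_exp_one_mul_div_pow (n : ℕ) {k : ℕ} (hk : k ≠ 0) :
    (n.choose k : ℝ) ≤ (exp 1 * n / k) ^ k := by
  have hk0 : (0 : ℝ) < k := by exact_mod_cast Nat.pos_of_ne_zero hk
  calc (n.choose k : ℝ) ≤ (n : ℝ) ^ k / k.factorial := Nat.choose_le_pow_div k n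
    _ = (n / k : ℝ) ^ k * ((k : ℝ) ^ k / k.factorial) := by
      rw [div_pow]; field_simp
    _ ≤ (n / k : ℝ) ^ k * exp k :=
      mul_le_mul_of_nonneg_left (pow_div_factorial_le_exp _ hk0.le k) (by positivity)
    _ = (exp 1 * n / k) ^ k := by
      rw [← exp_one_pow, ← mul_pow]; ring

def monotoneGrid (k m : ℕ) : Finset (Fin k → ℝ) :=
  (Finset.univ.filter fun f : Fin k → Fin (m + 1) => Monotone f).image
    fun f i => ((f i : ℕ) : ℝ) / m

lemma card_monotoneGrid_le (k m : ℕ) : (monotoneGrid k m).card ≤ (m + k).choose k := by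
  have h := card_filter_monotone_le (α := Fin (m + 1)) k
  rw [Fintype.card_fin, Nat.add_right_comm, Nat.add_sub_cancel] at h
  exact Finset.card_image_le.trans h

lemma exists_mem_monotoneGrid_norm_sub_le {k m : ℕ} (hm : 0 < m) {y : Fin k → ℝ}
    (hy : Monotone y) (hy01 : ∀ i, y i ∈ Set.Icc (0 : ℝ) 1) :
    ∃ a ∈ monotoneGrid k m, ‖y - a‖ ≤ 1 / m := by
  have hm0 : (0 : ℝ) < m := by exact_mod_cast hm
  have hfloor_lt : ∀ i, ⌊(m : ℝ) * y i⌋₊ < m + 1 := fun i =>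
    Nat.lt_succ_of_le (Nat.floor_le_of_le (mul_le_of_le_one_right hm0.le (hy01 i).2))
  let f : Fin k → Fin (m + 1) := fun i => ⟨⌊(m : ℝ) * y i⌋₊, hfloor_lt i⟩
  have hf : Monotone f := fun i j hij =>
    Fin.mk_le_mk.2 (Nat.floor_mono (mul_le_mul_of_nonneg_left (hy hij) hm0.le))
  refine ⟨_, Finset.mem_image_of_mem _ (Finset.mem_filter.2 ⟨Finset.mem_univ f, hf⟩),
    (pi_norm_le_iff_of_nonneg (by positivity)).2 fun i => ?_⟩
  have hlo : ((f i : ℕ) : ℝ) ≤ m * y i := Nat.floor_le (mul_nonneg hm0.le (hy01 i).1)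
  have hhi : (m : ℝ) * y i < (f i : ℕ) + 1 := Nat.lt_floor_add_one _
  have hcoord : y i - ((f i : ℕ) : ℝ) / m = ((m : ℝ) * y i - (f i : ℕ)) / m := by
    rw [sub_div, mul_div_cancel_left₀ _ hm0.ne']
  rw [Pi.sub_apply, Real.norm_eq_abs, hcoord, abs_div, abs_of_pos hm0,
    div_le_div_iff_of_pos_right hm0, abs_le]
  constructor <;> linarith

lemma exists_nat_le_and_choose_le_exp {k : ℕ} (hk : k ≠ 0) {L : ℝ} (hL : 3 ≤ L) :
    ∃ m : ℕ, k * exp (L - 3) ≤ m ∧ ((m + k).choose k : ℝ) ≤ exp (k * L) := by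
  have hk0 : (0 : ℝ) < k := by exact_mod_cast Nat.pos_of_ne_zero hk
  have hk1 : (1 : ℝ) ≤ k := by exact_mod_cast Nat.one_le_iff_ne_zero.2 hk
  set x := exp (L - 3)
  have hx : 1 ≤ x := one_le_exp (by linarith)
  refine ⟨⌈k * x⌉₊, Nat.le_ceil _, ?_⟩
  have hceil : (⌈k * x⌉₊ : ℝ) < k * x + 1 := Nat.ceil_lt_add_one (by positivity)
  -- `m + k ≤ 3 k x ≤ e² k x`, and `e · e² · x = e^L`.
  have hbase : exp 1 * (⌈k * x⌉₊ + k : ℕ) / k ≤ exp L := by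
    have h3 : (3 : ℝ) ≤ exp 2 := by linarith [add_one_le_exp (2 : ℝ)]
    have hL' : exp L = exp 2 * exp 1 * x := by rw [← exp_add, ← exp_add]; ring_nf
    have hmk : (⌈k * x⌉₊ : ℝ) + k ≤ exp 2 * (k * x) := by
      nlinarith [mul_le_mul_of_nonneg_left hx hk0.le,
        mul_le_mul_of_nonneg_right h3 (mul_nonneg hk0.le (zero_le_one.trans hx))]
    rw [div_le_iff₀ hk0, hL']
    push_cast
    nlinarith [exp_pos 1]
  calc (((⌈k * x⌉₊ + k).choose k : ℕ) : ℝ) ≤ (exp 1 * (⌈k * x⌉₊ + k : ℕ) / k) ^ k :=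
        choose_le_exp_one_mul_div_pow _ hk
    _ ≤ exp L ^ k := pow_le_pow_left₀ (by positivity) hbase k
    _ = exp (k * L) := (exp_nat_mul L k).symm

lemma quantError_le_of_ae_exists_le {Ω F : Type*} [MeasurableSpace Ω] {P : Measure Ω}
    [IsProbabilityMeasure P] {X : Ω → F} {d : F → F → ℝ} (hd : ∀ x y, 0 ≤ d x y)
    {s r δ : ℝ} (hs : 0 < s) {C : Finset F} (hCr : (C.card : ℝ) ≤ exp r)
    (hX : ∀ᵐ ω ∂P, ∃ a ∈ C, d (X ω) a ≤ δ) :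
    quantError P X d s r ≤ δ := by
  unfold quantError quantErrorIn
  obtain ⟨ω₀, a₀, ha₀, hδ₀⟩ := hX.exists
  have hC : C.Nonempty := ⟨a₀, ha₀⟩
  have hδ : 0 ≤ δ := (hd _ _).trans hδ₀
  have hdist_nonneg : ∀ (C' : Finset F) (hC' : C'.Nonempty) ω,
      0 ≤ C'.inf' hC' fun a => d (X ω) a := fun C' hC' ω =>
    Finset.le_inf' hC' _ fun a _ => hd _ _
  have hlog : Real.log C.card ≤ r :=
    (log_le_iff_le_exp (by exact_mod_cast hC.card_pos)).2 hCr
  have hint : ∫ ω, (C.inf' hC fun a => d (X ω) a) ^ s ∂P ≤ δ ^ s := by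
    have hmono := integral_mono_of_nonneg (μ := P)
      (Eventually.of_forall fun ω => rpow_nonneg (hdist_nonneg C hC ω) s)
      (integrable_const (δ ^ s)) (hX.mono fun ω ⟨a, ha, h⟩ =>
        rpow_le_rpow (hdist_nonneg C hC ω) ((C.inf'_le _ ha).trans h) hs.le)
    simpa using hmono
  refine (csInf_le ?_ ?_).trans
    (?_ : (∫ ω, (C.inf' hC fun a => d (X ω) a) ^ s ∂P) ^ (1 / s) ≤ δ)
  · refine ⟨0, ?_⟩
    rintro _ ⟨C', hC', -, -, rfl⟩
    exact rpow_nonneg (integral_nonneg fun ω => rpow_nonneg (hdist_nonneg C' hC' ω) s) _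
  · exact ⟨C, hC, Set.subset_univ _, hlog, rfl⟩
  · calc (∫ ω, (C.inf' hC fun a => d (X ω) a) ^ s ∂P) ^ (1 / s) ≤ (δ ^ s) ^ (1 / s) :=
          rpow_le_rpow (integral_nonneg fun ω => rpow_nonneg (hdist_nonneg C hC ω) s) hint
            (by positivity)
      _ = δ := by rw [← rpow_mul hδ, mul_one_div_cancel hs.ne', rpow_one]

/-- There are absolute constants `c* > 0` and `κ > 0` such
that for every `k ≥ 1`, every random variable `Y` in `[0,1]^k` with a.s.
nondecreasing coordinates, every `s > 0` and every `r ≥ c* k`: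
`D^{(q)}(r | Y, ‖·‖_∞, s) ≤ (κ/k) e^{−r/k}`. -/
theorem statement19 :
    ∃ cstar κ : ℝ, 0 < cstar ∧ 0 < κ ∧
      ∀ (Ω : Type u) [MeasurableSpace Ω] (P : Measure Ω) [IsProbabilityMeasure P]
        (k : ℕ), 1 ≤ k →
        ∀ Y : Ω → (Fin k → ℝ), Measurable Y →
          (∀ ω i, Y ω i ∈ Set.Icc (0 : ℝ) 1) →
          (∀ᵐ ω ∂P, Monotone (Y ω)) →
          ∀ s r : ℝ, 0 < s → cstar * k ≤ r →
            quantError P Y (fun x y => ‖x - y‖) s r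
              ≤ κ / k * Real.exp (-r / k) := by
  refine ⟨3, exp 3, by norm_num, exp_pos 3, ?_⟩
  intro Ω _ P _ k hk Y _ hY01 hYmono s r hs hr
  have hk0 : (0 : ℝ) < k := by exact_mod_cast hk
  obtain ⟨m, hm, hchoose⟩ :=
    exists_nat_le_and_choose_le_exp (k := k) (by omega) (L := r / k) ((le_div_iff₀ hk0).2 hr)
  have hm0 : (0 : ℝ) < m := lt_of_lt_of_le (by positivity) hm
  have hcard : ((monotoneGrid k m).card : ℝ) ≤ exp r := by
    rw [mul_div_cancel₀ r hk0.ne'] at hchoose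
    exact (Nat.cast_le.2 (card_monotoneGrid_le k m)).trans hchoose
  calc quantError P Y (fun x y => ‖x - y‖) s r ≤ 1 / m :=
        quantError_le_of_ae_exists_le (fun _ _ => norm_nonneg _) hs hcard
          (hYmono.mono fun ω hω =>
            exists_mem_monotoneGrid_norm_sub_le (Nat.cast_pos.1 hm0) hω (hY01 ω))
    _ ≤ 1 / (k * exp (r / k - 3)) := one_div_le_one_div_of_le (mul_pos hk0 (exp_pos _)) hm
    _ = exp 3 / k * exp (-r / k) := by
      rw [exp_sub, neg_div, exp_neg]; field_simp

end JumpCoding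
end
end
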